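/- For a bounded sequence x in a normed space V, p(x) = 0 if and only if L(x) = 0 for every Banach limit functional L on ℓ^∞(V). -/

import Mathlib

/-!
Write `p_n(y) = sup_j ‖∑_{i<n} y (i + j)‖ / n`, so that `p = lim p_n`.

If `L` is a Banach limit, then `L x = L (∑_{j<n} Tʲ x) / n`, and the `k`-th entry of
`∑_{j<n} Tʲ x` is a window sum of length `n`; hence `|L x| ≤ p_n(x)` for every `n ≥ 1` and
so `|L x| ≤ p(x)`. Conversely `p` is a seminorm bounded by `‖·‖` and vanishing on every
`T y - y` (the window sums telescope), so a Hahn–Banach extension of `c x ↦ c p(x)` dominated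
by `p` is a Banach limit taking the value `p(x)` at `x`.
-/

open Filter Topology BoundedContinuousFunction

/-- The left shift operator on `ℓ^∞(V)`, realized as bounded continuous functions `ℕ →ᵇ V`. -/
noncomputable def leftShift {V : Type*} [NormedAddCommGroup V] (x : ℕ →ᵇ V) : ℕ →ᵇ V :=
  BoundedContinuousFunction.ofNormedAddCommGroup (fun n => x (n + 1))
    (continuous_of_discreteTopology) ‖x‖ (fun n => x.norm_coe_le_norm (n + 1))

section Sublinear

variable {E : Type*} [AddCommGroup E] [Module ℝ E] {N : E → ℝ}

lemma apply_zero_of_sublinear (N_hom : ∀ c : ℝ, 0 < c → ∀ x, N (c • x) = c * N x) : N 0 = 0 := by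
  have := N_hom 2 two_pos 0
  rw [smul_zero] at this
  linarith

lemma mul_le_apply_smul_of_sublinear (N_hom : ∀ c : ℝ, 0 < c → ∀ x, N (c • x) = c * N x)
    (N_add : ∀ x y, N (x + y) ≤ N x + N y) (c : ℝ) (x : E) : c * N x ≤ N (c • x) := by
  have N_zero := apply_zero_of_sublinear N_hom
  rcases lt_trichotomy c 0 with hc | rfl | hc
  · have := N_add (c • x) ((-c) • x)
    rw [← add_smul, add_neg_cancel, zero_smul, N_zero, N_hom (-c) (neg_pos.mpr hc)] at this
    linarith
  · simp [N_zero]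
  · exact (N_hom c hc x).ge

theorem exists_linearMap_le_sublinear_apply_eq
    (N_hom : ∀ c : ℝ, 0 < c → ∀ x, N (c • x) = c * N x)
    (N_add : ∀ x y, N (x + y) ≤ N x + N y) (x : E) :
    ∃ g : E →ₗ[ℝ] ℝ, (∀ y, g y ≤ N y) ∧ g x = N x := by
  have hdom : ∀ c : ℝ, c • x = 0 → RingHom.id ℝ c • N x = 0 := fun c hc => by
    have h₁ := mul_le_apply_smul_of_sublinear N_hom N_add c x
    have h₂ := mul_le_apply_smul_of_sublinear N_hom N_add (-c) x
    rw [neg_smul, hc, neg_zero, apply_zero_of_sublinear N_hom] at h₂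
    rw [hc, apply_zero_of_sublinear N_hom] at h₁
    rw [RingHom.id_apply, smul_eq_mul]
    linarith
  let f := LinearPMap.mkSpanSingleton' x (N x) hdom
  have hf : ∀ z : f.domain, f z ≤ N z := by
    rintro ⟨z, hz⟩
    obtain ⟨c, rfl⟩ := Submodule.mem_span_singleton.mp hz
    rw [LinearPMap.mkSpanSingleton'_apply]
    exact mul_le_apply_smul_of_sublinear N_hom N_add c x
  obtain ⟨g, hgf, hgN⟩ := exists_extension_of_le_sublinear f N N_hom N_add hf
  have hx : x ∈ f.domain := Submodule.mem_span_singleton_self x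
  exact ⟨g, hgN, (hgf ⟨x, hx⟩).trans (LinearPMap.mkSpanSingleton'_apply_self x (N x) hdom hx)⟩

end Sublinear

section WindowAverage

variable {V : Type*} [NormedAddCommGroup V]

lemma leftShift_iterate_apply (j : ℕ) (y : ℕ →ᵇ V) (k : ℕ) :
    (leftShift^[j] y) k = y (k + j) := by
  induction j generalizing y with
  | zero => rfl
  | succ j ih =>
    rw [Function.iterate_succ_apply, ih]
    exact congrArg y (Nat.add_assoc _ _ _)

noncomputable def windowAvgNorm (y : ℕ →ᵇ V) (n j : ℕ) : ℝ :=
  ‖∑ i ∈ Finset.range n, y (i + j)‖ / n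

/-- The quantity whose limit as `n → ∞` is `p(y)`. -/
noncomputable def supWindowAvgNorm (y : ℕ →ᵇ V) (n : ℕ) : ℝ :=
  ⨆ j : ℕ, windowAvgNorm y n j

lemma windowAvgNorm_nonneg (y : ℕ →ᵇ V) (n j : ℕ) : 0 ≤ windowAvgNorm y n j := by
  unfold windowAvgNorm; positivity

lemma norm_sum_window_le (y : ℕ →ᵇ V) (n j : ℕ) :
    ‖∑ i ∈ Finset.range n, y (i + j)‖ ≤ n * ‖y‖ :=
  calc ‖∑ i ∈ Finset.range n, y (i + j)‖ ≤ ∑ i ∈ Finset.range n, ‖y (i + j)‖ := norm_sum_le _ _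
    _ ≤ ∑ _i ∈ Finset.range n, ‖y‖ := Finset.sum_le_sum fun i _ => y.norm_coe_le_norm _
    _ = n * ‖y‖ := by simp

lemma windowAvgNorm_le_norm (y : ℕ →ᵇ V) (n j : ℕ) : windowAvgNorm y n j ≤ ‖y‖ := by
  rcases n.eq_zero_or_pos with rfl | hn
  · simp [windowAvgNorm]
  · rw [windowAvgNorm, div_le_iff₀ (by positivity), mul_comm]
    exact norm_sum_window_le y n j

lemma bddAbove_range_windowAvgNorm (y : ℕ →ᵇ V) (n : ℕ) :
    BddAbove (Set.range (windowAvgNorm y n)) :=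
  ⟨‖y‖, Set.forall_mem_range.mpr (windowAvgNorm_le_norm y n)⟩

lemma windowAvgNorm_le_supWindowAvgNorm (y : ℕ →ᵇ V) (n j : ℕ) :
    windowAvgNorm y n j ≤ supWindowAvgNorm y n :=
  le_ciSup (bddAbove_range_windowAvgNorm y n) j

lemma supWindowAvgNorm_le_norm (y : ℕ →ᵇ V) (n : ℕ) : supWindowAvgNorm y n ≤ ‖y‖ :=
  ciSup_le (windowAvgNorm_le_norm y n)

lemma supWindowAvgNorm_add_le (y z : ℕ →ᵇ V) (n : ℕ) :
    supWindowAvgNorm (y + z) n ≤ supWindowAvgNorm y n + supWindowAvgNorm z n := by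
  refine ciSup_le fun j => ?_
  have hwindow : windowAvgNorm (y + z) n j ≤ windowAvgNorm y n j + windowAvgNorm z n j := by
    rw [windowAvgNorm, windowAvgNorm, windowAvgNorm, ← add_div]
    gcongr
    simpa only [BoundedContinuousFunction.coe_add, Pi.add_apply, Finset.sum_add_distrib]
      using norm_add_le _ _
  exact hwindow.trans (add_le_add (windowAvgNorm_le_supWindowAvgNorm y n j)
    (windowAvgNorm_le_supWindowAvgNorm z n j))

lemma supWindowAvgNorm_smul [NormedSpace ℝ V] (c : ℝ) (y : ℕ →ᵇ V) (n : ℕ) :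
    supWindowAvgNorm (c • y) n = |c| * supWindowAvgNorm y n := by
  rw [supWindowAvgNorm, supWindowAvgNorm, Real.mul_iSup_of_nonneg (abs_nonneg c)]
  congr 1
  funext j
  simp only [windowAvgNorm, BoundedContinuousFunction.coe_smul, ← Finset.smul_sum, norm_smul,
    Real.norm_eq_abs, mul_div_assoc]

/-- The window sums of `T y - y` telescope to `y (n + j) - y j`. -/
lemma supWindowAvgNorm_leftShift_sub_le (y : ℕ →ᵇ V) (n : ℕ) :
    supWindowAvgNorm (leftShift y - y) n ≤ 2 * ‖y‖ / n := by
  refine ciSup_le fun j => ?_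
  rw [windowAvgNorm]
  gcongr
  have htelescope : ∑ i ∈ Finset.range n, (leftShift y - y) (i + j) = y (n + j) - y (0 + j) := by
    rw [← Finset.sum_range_sub (fun i => y (i + j)) n]
    refine Finset.sum_congr rfl fun i _ => ?_
    exact congrArg (· - y (i + j)) (congrArg y (Nat.add_right_comm _ _ _))
  rw [htelescope, two_mul]
  exact (norm_sub_le _ _).trans (add_le_add (y.norm_coe_le_norm _) (y.norm_coe_le_norm _))

end WindowAverage

section Limit

variable {V : Type*} [NormedAddCommGroup V]

def IsSupWindowAvgNormLimit (p : (ℕ →ᵇ V) → ℝ) : Prop :=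
  ∀ y, Tendsto (supWindowAvgNorm y) atTop (𝓝 (p y))

variable {p : (ℕ →ᵇ V) → ℝ}

lemma IsSupWindowAvgNormLimit.le_norm (hp : IsSupWindowAvgNormLimit p) (y : ℕ →ᵇ V) :
    p y ≤ ‖y‖ :=
  le_of_tendsto' (hp y) (supWindowAvgNorm_le_norm y)

lemma IsSupWindowAvgNormLimit.add_le (hp : IsSupWindowAvgNormLimit p) (y z : ℕ →ᵇ V) :
    p (y + z) ≤ p y + p z :=
  le_of_tendsto_of_tendsto' (hp (y + z)) ((hp y).add (hp z)) (supWindowAvgNorm_add_le y z)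

lemma IsSupWindowAvgNormLimit.smul [NormedSpace ℝ V] (hp : IsSupWindowAvgNormLimit p) (c : ℝ)
    (y : ℕ →ᵇ V) :
    p (c • y) = |c| * p y :=
  tendsto_nhds_unique (hp (c • y))
    (((hp y).const_mul |c|).congr fun n => (supWindowAvgNorm_smul c y n).symm)

lemma IsSupWindowAvgNormLimit.leftShift_sub (hp : IsSupWindowAvgNormLimit p) (y : ℕ →ᵇ V) :
    p (leftShift y - y) = 0 := by
  refine tendsto_nhds_unique (hp _) (tendsto_of_tendsto_of_tendsto_of_le_of_le
    tendsto_const_nhds (tendsto_const_div_atTop_nhds_zero_nat (2 * ‖y‖)) (fun n => ?_)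
    (supWindowAvgNorm_leftShift_sub_le y))
  exact Real.iSup_nonneg (windowAvgNorm_nonneg _ n)

lemma IsSupWindowAvgNormLimit.sub_leftShift [NormedSpace ℝ V] (hp : IsSupWindowAvgNormLimit p)
    (y : ℕ →ᵇ V) :
    p (y - leftShift y) = 0 := by
  rw [← neg_sub, ← neg_one_smul ℝ, hp.smul, hp.leftShift_sub, mul_zero]

end Limit

section BanachLimit

variable {V : Type*} [NormedAddCommGroup V] [NormedSpace ℝ V]

structure IsBanachLimit (L : (ℕ →ᵇ V) →L[ℝ] ℝ) : Prop where
  norm_le_one : ‖L‖ ≤ 1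
  map_leftShift : ∀ y, L (leftShift y) = L y

variable {L : (ℕ →ᵇ V) →L[ℝ] ℝ} {p : (ℕ →ᵇ V) → ℝ}

lemma IsBanachLimit.map_leftShift_iterate (hL : IsBanachLimit L) (j : ℕ) (y : ℕ →ᵇ V) :
    L (leftShift^[j] y) = L y := by
  induction j generalizing y with
  | zero => rfl
  | succ j ih => rw [Function.iterate_succ_apply, ih, hL.map_leftShift]

lemma IsBanachLimit.abs_apply_le_supWindowAvgNorm (hL : IsBanachLimit L) (x : ℕ →ᵇ V) {n : ℕ}
    (hn : 0 < n) : |L x| ≤ supWindowAvgNorm x n := by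
  set S : ℕ →ᵇ V := ∑ j ∈ Finset.range n, leftShift^[j] x
  have hLS : L S = n * L x := by
    simp [S, hL.map_leftShift_iterate]
  have hS : ‖S‖ ≤ n * supWindowAvgNorm x n := by
    have hsup : 0 ≤ supWindowAvgNorm x n := Real.iSup_nonneg (windowAvgNorm_nonneg x n)
    refine (norm_le (by positivity)).mpr fun k => ?_
    have hSk : S k = ∑ i ∈ Finset.range n, x (i + k) := by
      simp only [S, BoundedContinuousFunction.sum_apply, leftShift_iterate_apply, add_comm k]
    have := windowAvgNorm_le_supWindowAvgNorm x n k
    rwa [windowAvgNorm, div_le_iff₀ (by positivity), mul_comm, ← hSk] at this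
  have : n * |L x| ≤ n * supWindowAvgNorm x n :=
    calc n * |L x| = |L S| := by rw [hLS, abs_mul, Nat.abs_cast]
      _ ≤ ‖L‖ * ‖S‖ := L.le_opNorm S
      _ ≤ ‖S‖ := mul_le_of_le_one_left (norm_nonneg S) hL.norm_le_one
      _ ≤ n * supWindowAvgNorm x n := hS
  exact le_of_mul_le_mul_left this (by positivity)

lemma IsBanachLimit.abs_apply_le (hL : IsBanachLimit L) (hp : IsSupWindowAvgNormLimit p)
    (x : ℕ →ᵇ V) : |L x| ≤ p x :=
  ge_of_tendsto (hp x)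
    (eventually_atTop.mpr ⟨1, fun _ hn => hL.abs_apply_le_supWindowAvgNorm x hn⟩)

lemma exists_isBanachLimit_apply_eq (hp : IsSupWindowAvgNormLimit p) (x : ℕ →ᵇ V) :
    ∃ L : (ℕ →ᵇ V) →L[ℝ] ℝ, IsBanachLimit L ∧ L x = p x := by
  obtain ⟨g, hgp, hgx⟩ := exists_linearMap_le_sublinear_apply_eq
    (fun c hc y => by rw [hp.smul, abs_of_pos hc]) hp.add_le x
  have hg_le : ∀ y, g y ≤ ‖y‖ := fun y => (hgp y).trans (hp.le_norm y)
  have hg_bound : ∀ y, ‖g y‖ ≤ 1 * ‖y‖ := fun y => by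
    rw [one_mul, Real.norm_eq_abs, abs_le]
    have := hg_le (-y)
    rw [map_neg, norm_neg] at this
    exact ⟨by linarith, hg_le y⟩
  refine ⟨g.mkContinuous 1 hg_bound,
    ⟨g.mkContinuous_norm_le zero_le_one hg_bound, fun y => ?_⟩, hgx⟩
  have h₁ := hgp (leftShift y - y)
  have h₂ := hgp (y - leftShift y)
  rw [hp.leftShift_sub, map_sub] at h₁
  rw [hp.sub_leftShift, map_sub] at h₂
  change g (leftShift y) = g y
  linarith

end BanachLimit

/-- For a bounded sequence `x`, `p(x) = 0` iff `L(x) = 0` for every Banach limit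
functional `L` on `ℓ^∞(V)` (i.e. every bounded linear functional with `‖L‖ ≤ 1` that is
shift-invariant). -/
theorem stmt_12 {V : Type*} [NormedAddCommGroup V] [NormedSpace ℝ V]
    (p : (ℕ →ᵇ V) → ℝ)
    (hp : ∀ y : ℕ →ᵇ V,
      Tendsto (fun n : ℕ => ⨆ j : ℕ, ‖∑ i ∈ Finset.range n, y (i + j)‖ / (n : ℝ))
        atTop (𝓝 (p y)))
    (x : ℕ →ᵇ V) :
    p x = 0 ↔
      ∀ L : (ℕ →ᵇ V) →L[ℝ] ℝ, ‖L‖ ≤ 1 → (∀ y : ℕ →ᵇ V, L (leftShift y) = L y) →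
        L x = 0 := by
  have hp' : IsSupWindowAvgNormLimit p := hp
  constructor
  · intro hpx L hL_norm hL_shift
    have := (IsBanachLimit.mk hL_norm hL_shift).abs_apply_le hp' x
    rw [hpx] at this
    exact abs_nonpos_iff.mp this
  · intro hL
    obtain ⟨L, hL_banach, hLx⟩ := exists_isBanachLimit_apply_eq hp' x
    rw [← hLx]
    exact hL L hL_banach.norm_le_one hL_banach.map_leftShift
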